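/- Let n ≥ 1, let ρ be any 2^n × 2^n complex matrix, and let P, P' be two distinct X-type Pauli strings (n-fold tensor products of matrices from {I, X}). Then summing over all 2^n Z-type Pauli strings Q (n-fold tensor products of matrices from {I, Z}) one has ∑_Q Q · P · Q · ρ · Q · P' · Q = 0. (Restricted Pauli Twirl, X-type errors twirled by Z-strings.) -/
import Mathlib


open Matrix

/-- The four single-qubit Pauli matrices I, X, Y, Z. -/
noncomputable def pauli : Fin 4 → Matrix (Fin 2) (Fin 2) ℂ :=
  ![!![1, 0; 0, 1], !![0, 1; 1, 0], !![0, -Complex.I; Complex.I, 0], !![1, 0; 0, -1]]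

/-- The `n`-qubit Pauli string `⊗ᵢ σ_{f i}`. -/
noncomputable def PauliString (n : ℕ) (f : Fin n → Fin 4) :
    Matrix (Fin n → Fin 2) (Fin n → Fin 2) ℂ :=
  Matrix.of fun x y => ∏ i, pauli (f i) (x i) (y i)

/-- A Z-type Pauli string: every factor lies in `{I, Z}`, encoded by a bit string. -/
noncomputable def Zstring (n : ℕ) (a : Fin n → Fin 2) :
    Matrix (Fin n → Fin 2) (Fin n → Fin 2) ℂ :=
  PauliString n fun i => if a i = 0 then 0 else 3

/-- An X-type Pauli string: every factor lies in `{I, X}`, encoded by a bit string. -/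
noncomputable def Xstring (n : ℕ) (b : Fin n → Fin 2) :
    Matrix (Fin n → Fin 2) (Fin n → Fin 2) ℂ :=
  PauliString n fun i => if b i = 0 then 0 else 1

/-- single-qubit sign -/
noncomputable def psgn (b x : Fin 2) : ℂ := if b = 1 ∧ x = 1 then -1 else 1

lemma zentry (b x y : Fin 2) :
    pauli (if b = 0 then 0 else 3) x y = if x = y then psgn b x else 0 := by
  fin_cases b <;> fin_cases x <;> fin_cases y <;> simp [pauli, psgn]

lemma xentry (a x y : Fin 2) :
    pauli (if a = 0 then 0 else 1) x y = if y = x + a then (1:ℂ) else 0 := by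
  fin_cases a <;> fin_cases x <;> fin_cases y <;> simp [pauli]

/-- multi-qubit sign -/
noncomputable def Dsgn {n : ℕ} (b x : Fin n → Fin 2) : ℂ := ∏ i, psgn (b i) (x i)

lemma Zdiag (n : ℕ) (b : Fin n → Fin 2) :
    Zstring n b = Matrix.diagonal (Dsgn b) := by
  ext x y
  simp only [Zstring, PauliString, Matrix.of_apply]
  by_cases h : x = y
  · subst h
    simp [Matrix.diagonal_apply_eq, Dsgn, zentry]
  · rw [Matrix.diagonal_apply_ne _ h]
    obtain ⟨i, hi⟩ := Function.ne_iff.mp h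
    exact Finset.prod_eq_zero (Finset.mem_univ i) (by rw [zentry, if_neg hi])

lemma Xent (n : ℕ) (a x y : Fin n → Fin 2) :
    Xstring n a x y = if y = x + a then (1:ℂ) else 0 := by
  simp only [Xstring, PauliString, Matrix.of_apply]
  by_cases h : y = x + a
  · subst h
    simp [xentry]
  · rw [if_neg h]
    obtain ⟨i, hi⟩ := Function.ne_iff.mp h
    exact Finset.prod_eq_zero (Finset.mem_univ i)
      (by rw [xentry]; exact if_neg (by simpa using hi))

lemma psgn_mul (b x a : Fin 2) :
    psgn b x * psgn b (x + a) = if a = 1 ∧ b = 1 then -1 else 1 := by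
  fin_cases b <;> fin_cases x <;> fin_cases a <;> simp [psgn]

lemma Xinj (n : ℕ) {a a' : Fin n → Fin 2} (h : Xstring n a = Xstring n a') :
    a = a' := by
  have := congrFun (congrFun h 0) a
  rw [Xent, Xent, if_pos (by simp)] at this
  by_contra hne
  rw [if_neg (by simpa using hne)] at this
  exact one_ne_zero this

lemma comm_key (n : ℕ) (b a : Fin n → Fin 2) :
    Zstring n b * Xstring n a * Zstring n b =
      (∏ i, if a i = 1 ∧ b i = 1 then (-1:ℂ) else 1) • Xstring n a := by
  rw [Zdiag]
  ext x y
  rw [Matrix.mul_diagonal, Matrix.diagonal_mul, Matrix.smul_apply, smul_eq_mul,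
    Xent]
  by_cases h : y = x + a
  · subst h
    simp only [if_pos rfl, mul_one]
    rw [mul_comm (Dsgn b x), mul_assoc,
      show Dsgn b x * Dsgn b (x + a) = ∏ i, psgn (b i) (x i) * psgn (b i) (x i + a i) from
        (Finset.prod_mul_distrib).symm, mul_comm]
    exact congrArg (· * _) (Finset.prod_congr rfl fun i _ => psgn_mul (b i) (x i) (a i))
  · simp [if_neg h]

set_option maxHeartbeats 1600000 in
theorem restricted_pauli_twirl_X (n : ℕ) (hn : 1 ≤ n)
    (ρ : Matrix (Fin n → Fin 2) (Fin n → Fin 2) ℂ)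
    (P P' : Matrix (Fin n → Fin 2) (Fin n → Fin 2) ℂ)
    (hP : ∃ a : Fin n → Fin 2, P = Xstring n a)
    (hP' : ∃ a : Fin n → Fin 2, P' = Xstring n a)
    (hPP' : P ≠ P') :
    ∑ b : Fin n → Fin 2,
      Zstring n b * P * Zstring n b * ρ * Zstring n b * P' * Zstring n b = 0 := by
  obtain ⟨a, rfl⟩ := hP
  obtain ⟨a', rfl⟩ := hP'
  have haa' : a ≠ a' := fun h => hPP' (by rw [h])
  have hterm : ∀ b : Fin n → Fin 2,
      Zstring n b * Xstring n a * Zstring n b * ρ * Zstring n b * Xstring n a' * Zstring n b =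
        ((∏ i, if a i = 1 ∧ b i = 1 then (-1:ℂ) else 1) *
         (∏ i, if a' i = 1 ∧ b i = 1 then (-1:ℂ) else 1)) •
          (Xstring n a * ρ * Xstring n a') := by
    intro b
    have h1 := comm_key n b a
    have h2 := comm_key n b a'
    calc Zstring n b * Xstring n a * Zstring n b * ρ * Zstring n b * Xstring n a' * Zstring n b
        = (Zstring n b * Xstring n a * Zstring n b) * ρ *
            (Zstring n b * Xstring n a' * Zstring n b) := by
          simp only [Matrix.mul_assoc]
      _ = _ := by
          rw [h1, h2]
          simp only [smul_mul_assoc, mul_smul_comm, smul_smul]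
          rw [mul_comm]
  simp only [hterm, ← Finset.sum_smul]
  have hsum : (∑ b : Fin n → Fin 2,
      (∏ i, if a i = 1 ∧ b i = 1 then (-1:ℂ) else 1) *
      (∏ i, if a' i = 1 ∧ b i = 1 then (-1:ℂ) else 1)) = 0 := by
    have hg : ∀ b : Fin n → Fin 2,
        (∏ i, if a i = 1 ∧ b i = 1 then (-1:ℂ) else 1) *
        (∏ i, if a' i = 1 ∧ b i = 1 then (-1:ℂ) else 1) =
        ∏ i, ((fun (i : Fin n) (t : Fin 2) =>
            (if a i = 1 ∧ t = 1 then (-1:ℂ) else 1) *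
            (if a' i = 1 ∧ t = 1 then (-1:ℂ) else 1)) i (b i)) := by
      intro b; exact (Finset.prod_mul_distrib).symm
    calc (∑ b : Fin n → Fin 2,
          (∏ i, if a i = 1 ∧ b i = 1 then (-1:ℂ) else 1) *
          (∏ i, if a' i = 1 ∧ b i = 1 then (-1:ℂ) else 1))
        = ∑ b : Fin n → Fin 2, ∏ i, ((fun (i : Fin n) (t : Fin 2) =>
            (if a i = 1 ∧ t = 1 then (-1:ℂ) else 1) *
            (if a' i = 1 ∧ t = 1 then (-1:ℂ) else 1)) i (b i)) :=
          Finset.sum_congr rfl fun b _ => hg b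
      _ = ∏ i, ∑ t : Fin 2, ((if a i = 1 ∧ t = 1 then (-1:ℂ) else 1) *
            (if a' i = 1 ∧ t = 1 then (-1:ℂ) else 1)) :=
          (Fintype.prod_sum (fun (i : Fin n) (t : Fin 2) =>
            (if a i = 1 ∧ t = 1 then (-1:ℂ) else 1) *
            (if a' i = 1 ∧ t = 1 then (-1:ℂ) else 1))).symm
      _ = 0 := by
          obtain ⟨i, hi⟩ := Function.ne_iff.mp haa'
          refine Finset.prod_eq_zero (Finset.mem_univ i) ?_
          rw [Fin.sum_univ_two]
          have h01 : (0 : Fin 2) ≠ 1 := by omega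
          rcases (by omega : a i = 1 ∧ a' i ≠ 1 ∨ a' i = 1 ∧ a i ≠ 1) with ⟨h1, h2⟩ | ⟨h1, h2⟩ <;>
            simp [h1, h2, h01] <;> ring
  rw [hsum, zero_smul]
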